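/- Let (X,T) be a semi-simple system (every point is a minimal point). If the orbit-closure map x ↦ cl O(x,T) from X to the hyperspace 2^X is continuous at some point x₀, then it is continuous at every point of the orbit closure cl O(x₀,T). -/

import Mathlib

open Set Filter TopologicalSpace

/-- The `n`-th iterate (n ∈ ℤ) of a homeomorphism. -/
def hIter {X : Type*} [TopologicalSpace X] (T : X ≃ₜ X) (n : ℤ) : X → X :=
  fun x => (T.toEquiv ^ n) x

/-- The full orbit {Tⁿ x : n ∈ ℤ} of a point. -/
def orb {X : Type*} [TopologicalSpace X] (T : X ≃ₜ X) (x : X) : Set X :=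
  Set.range fun n : ℤ => hIter T n x

/-- The orbit closure of a point. -/
def orbCl {X : Type*} [TopologicalSpace X] (T : X ≃ₜ X) (x : X) : Set X :=
  closure (orb T x)

/-- A system is minimal if it has no proper nonempty closed invariant subset. -/
def IsMinimalSys {X : Type*} [TopologicalSpace X] (T : X → X) : Prop :=
  ∀ A : Set X, IsClosed A → A.Nonempty → T '' A = A → A = Set.univ

/-- `J` is a joining of the subsystems `(K,T)` and `(L,S)`: a closed `T × S`-invariant
subset of `K ×ˢ L` projecting onto `K` and onto `L`. -/
def IsJoiningOn {X Y : Type*} [TopologicalSpace X] [TopologicalSpace Y]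
    (T : X → X) (S : Y → Y) (K : Set X) (L : Set Y) (J : Set (X × Y)) : Prop :=
  IsClosed J ∧ J ⊆ K ×ˢ L ∧ Prod.map T S '' J = J ∧
    Prod.fst '' J = K ∧ Prod.snd '' J = L

/-- The subsystems `(K,T)` and `(L,S)` are disjoint: their only joining is `K ×ˢ L`. -/
def DisjointOn {X Y : Type*} [TopologicalSpace X] [TopologicalSpace Y]
    (T : X → X) (S : Y → Y) (K : Set X) (L : Set Y) : Prop :=
  ∀ J : Set (X × Y), IsJoiningOn T S K L J → J = K ×ˢ L

/-- A point is a minimal point if its orbit closure is a minimal set. -/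
def IsMinimalPt {X : Type*} [TopologicalSpace X] (T : X ≃ₜ X) (x : X) : Prop :=
  ∀ B : Set X, IsClosed B → B.Nonempty → B ⊆ orbCl T x → ⇑T '' B = B → B = orbCl T x

/-- The orbit-closure map into the hyperspace of nonempty compact subsets of `X`
with the Hausdorff metric. -/
noncomputable def orbClC {X : Type*} [MetricSpace X] [CompactSpace X] (T : X ≃ₜ X)
    (x : X) : NonemptyCompacts X :=
  ⟨⟨orbCl T x, isClosed_closure.isCompact⟩,
    ⟨x, subset_closure ⟨0, by simp [hIter]⟩⟩⟩

/-!
In a semi-simple system every point `y` of the orbit closure of `x₀` has the same orbit closure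
as `x₀`, and the orbit-closure map is constant along orbits. Some `Tⁿ y` lies close to `x₀`, so
near `y` the orbit-closure map agrees with its composite with the continuous map `Tⁿ`, which is
close to its value at `x₀`, i.e. at `y`.
-/

theorem ContinuousAt.of_mem_closure_range_of_comp_eq {ι X Y : Type*} [TopologicalSpace X]
    [TopologicalSpace Y] {f : X → Y} {g : ι → X → X} (hg : ∀ i, Continuous (g i))
    (hfg : ∀ i, f ∘ g i = f) {x₀ y : X} (hf : ContinuousAt f x₀)
    (hx₀ : x₀ ∈ closure (range fun i => g i y)) (hy : f y = f x₀) : ContinuousAt f y := by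
  rw [ContinuousAt, tendsto_nhds]
  intro V hV hyV
  obtain ⟨U, hUV, hU, hx₀U⟩ := mem_nhds_iff.1 (hf (hV.mem_nhds (hy ▸ hyV)))
  obtain ⟨_, hiU, i, rfl⟩ := mem_closure_iff.1 hx₀ U hU hx₀U
  filter_upwards [(hU.preimage (hg i)).mem_nhds hiU] with z hz
  rw [← hfg i]
  exact hUV hz

section Orbit

variable {X : Type*} [TopologicalSpace X] (T : X ≃ₜ X)

theorem hIter_eq_coe_zpow (n : ℤ) : hIter T n = ⇑(T ^ n) := by
  let toPerm : (X ≃ₜ X) →* Equiv.Perm X :=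
    { toFun := Homeomorph.toEquiv, map_one' := rfl, map_mul' := fun _ _ => rfl }
  funext x
  exact congrArg (· x) (map_zpow toPerm T n).symm

theorem continuous_hIter (n : ℤ) : Continuous (hIter T n) := by
  rw [hIter_eq_coe_zpow]
  exact (T ^ n).continuous

theorem hIter_add (m n : ℤ) (x : X) : hIter T (m + n) x = hIter T m (hIter T n x) := by
  simp only [hIter_eq_coe_zpow, zpow_add, Homeomorph.mul_apply]

theorem mem_orb_self (x : X) : x ∈ orb T x := ⟨0, by simp [hIter_eq_coe_zpow]⟩

theorem image_hIter_orb (n : ℤ) (x : X) : hIter T n '' orb T x = orb T x := by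
  simp only [orb, ← range_comp', ← hIter_add]
  exact (Equiv.addLeft n).surjective.range_comp fun m => hIter T m x

theorem orb_hIter (n : ℤ) (x : X) : orb T (hIter T n x) = orb T x := by
  simp only [orb, ← hIter_add]
  exact (Equiv.addRight n).surjective.range_comp fun m => hIter T m x

theorem image_orbCl (x : X) : ⇑T '' orbCl T x = orbCl T x := by
  have hT : ⇑T = hIter T 1 := by rw [hIter_eq_coe_zpow, zpow_one]
  rw [orbCl, Homeomorph.image_closure, hT, image_hIter_orb]

theorem orbCl_subset_of_mem {x y : X} (hy : y ∈ orbCl T x) : orbCl T y ⊆ orbCl T x := by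
  refine closure_minimal ?_ isClosed_closure
  rintro _ ⟨n, rfl⟩
  have := image_closure_subset_closure_image (s := orb T x) (continuous_hIter T n)
  rw [image_hIter_orb] at this
  exact this (mem_image_of_mem _ hy)

theorem orbCl_eq_of_mem {x y : X} (hx : IsMinimalPt T x) (hy : y ∈ orbCl T x) :
    orbCl T y = orbCl T x :=
  hx _ isClosed_closure ⟨y, subset_closure (mem_orb_self T y)⟩ (orbCl_subset_of_mem T hy)
    (image_orbCl T y)

end Orbit

theorem orbClC_comp_hIter {X : Type*} [MetricSpace X] [CompactSpace X] (T : X ≃ₜ X) (n : ℤ) :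
    orbClC T ∘ hIter T n = orbClC T :=
  funext fun x => NonemptyCompacts.ext (congrArg closure (orb_hIter T n x))

/-- In a semi-simple system (every point minimal), if the orbit-closure map is
continuous at x₀ then it is continuous at every point of the orbit closure of x₀. -/
theorem stmt_15 {X : Type*} [MetricSpace X] [CompactSpace X] (T : X ≃ₜ X)
    (hss : ∀ x : X, IsMinimalPt T x)
    (x₀ : X) (hcont : ContinuousAt (orbClC T) x₀) :
    ∀ y ∈ orbCl T x₀, ContinuousAt (orbClC T) y := by
  intro y hy
  have hyx₀ : orbCl T y = orbCl T x₀ := orbCl_eq_of_mem T (hss x₀) hy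
  have hx₀ : x₀ ∈ closure (orb T y) := by
    rw [← orbCl, hyx₀]
    exact subset_closure (mem_orb_self T x₀)
  exact hcont.of_mem_closure_range_of_comp_eq (continuous_hIter T) (orbClC_comp_hIter T) hx₀
    (NonemptyCompacts.ext hyx₀)
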